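/- For all r ∈ ℝ² and ε > 0, the operator norm of E = (1/Q_ε)(I − (r⊗r)/Q_ε²) satisfies ‖E‖ ≤ 1/√ε, where Q_ε = √(ε + |r|²). -/
import Mathlib
open Matrix

/-- For all `r ∈ ℝ²` and `ε > 0`, the operator norm (w.r.t. the
Euclidean norm) of `E = (1/Q_ε)(I − (r/Q_ε) ⊗ (r/Q_ε))`, `Q_ε = √(ε + |r|²)`,
satisfies `‖E‖ ≤ 1/√ε`. -/
theorem willmore_E_opNorm_le (ε : ℝ) (hε : 0 < ε) (r : Fin 2 → ℝ) :
    let Q : ℝ := Real.sqrt (ε + r ⬝ᵥ r)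
    let E : Matrix (Fin 2) (Fin 2) ℝ :=
      Q⁻¹ • ((1 : Matrix (Fin 2) (Fin 2) ℝ) - (Q⁻¹ ^ 2) • Matrix.vecMulVec r r)
    ‖Matrix.toEuclideanCLM (𝕜 := ℝ) E‖ ≤ 1 / Real.sqrt ε := by
  intro Q E
  have hq : 0 < ε + r ⬝ᵥ r := by
    have : (0:ℝ) ≤ r ⬝ᵥ r := by
      simp [dotProduct, Fin.sum_univ_two]; nlinarith [sq_nonneg (r 0), sq_nonneg (r 1)]
    linarith
  have hQ : 0 < Q := Real.sqrt_pos.2 hq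
  have hQ2 : Q ^ 2 = ε + r ⬝ᵥ r := Real.sq_sqrt hq.le
  have hsε : 0 < Real.sqrt ε := Real.sqrt_pos.2 hε
  apply ContinuousLinearMap.opNorm_le_bound _ (by positivity)
  intro x
  have happ : ∀ i, (Matrix.toEuclideanCLM (𝕜 := ℝ) E x) i = E.mulVec (fun j => x j) i := by
    intro i
    have := Matrix.ofLp_toEuclideanCLM (𝕜 := ℝ) E x
    exact congrFun this i
  have key : ‖Matrix.toEuclideanCLM (𝕜 := ℝ) E x‖ ^ 2 ≤ (1 / Real.sqrt ε * ‖x‖) ^ 2 := by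
    have h1 : ‖Matrix.toEuclideanCLM (𝕜 := ℝ) E x‖ ^ 2
        = (Matrix.toEuclideanCLM (𝕜 := ℝ) E x 0) ^ 2 + (Matrix.toEuclideanCLM (𝕜 := ℝ) E x 1) ^ 2 := by
      rw [EuclideanSpace.norm_eq, Real.sq_sqrt (by positivity)]
      simp [Fin.sum_univ_two, sq_abs]
    have h2 : ‖x‖ ^ 2 = (x 0) ^ 2 + (x 1) ^ 2 := by
      rw [EuclideanSpace.norm_eq, Real.sq_sqrt (by positivity)]
      simp [Fin.sum_univ_two, sq_abs]
    rw [h1, mul_pow, h2, happ 0, happ 1]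
    have hE : ∀ i, E.mulVec (fun j => x j) i
        = Q⁻¹ * (x i - Q⁻¹^2 * (r 0 * x 0 + r 1 * x 1) * r i) := by
      intro i
      simp [E, mulVec, dotProduct, Fin.sum_univ_two, Matrix.smul_apply, Matrix.sub_apply,
        Matrix.one_apply, vecMulVec_apply]
      fin_cases i <;> simp <;> ring
    rw [hE 0, hE 1]
    have hd : r ⬝ᵥ r = r 0 * r 0 + r 1 * r 1 := by simp [dotProduct, Fin.sum_univ_two]
    have hQi : Q⁻¹ ^ 2 = (ε + (r 0 * r 0 + r 1 * r 1))⁻¹ := by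
      rw [inv_pow, hQ2, hd]
    have hse : (1 / Real.sqrt ε) ^ 2 = ε⁻¹ := by
      rw [div_pow, Real.sq_sqrt hε.le]; simp
    rw [mul_pow, mul_pow, hQi, hse]
    set a := r 0; set b := r 1; set u := x 0; set v := x 1
    have hq' : 0 < ε + (a * a + b * b) := by rw [hd] at hq; exact hq
    have hne : ε + (a * a + b * b) ≠ 0 := ne_of_gt hq'
    set q := ε + (a * a + b * b) with hqdef
    rw [← sub_nonneg]
    have hdiff : ε⁻¹ * (u ^ 2 + v ^ 2)
        - (q⁻¹ * (u - q⁻¹ * (a * u + b * v) * a) ^ 2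
          + q⁻¹ * (v - q⁻¹ * (a * u + b * v) * b) ^ 2)
        = (q ^ 2 * (a * a + b * b) * (u ^ 2 + v ^ 2)
            + ε * (q + ε) * (a * u + b * v) ^ 2) / (ε * q ^ 3) := by
      field_simp
      ring
    rw [hdiff]
    have t1 : 0 ≤ q ^ 2 * (a * a + b * b) * (u ^ 2 + v ^ 2) :=
      mul_nonneg (mul_nonneg (sq_nonneg q)
        (by nlinarith [mul_self_nonneg a, mul_self_nonneg b])) (by positivity)
    have t2 : 0 ≤ ε * (q + ε) * (a * u + b * v) ^ 2 :=
      mul_nonneg (mul_nonneg hε.le (by linarith)) (sq_nonneg _)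
    exact div_nonneg (by linarith) (mul_nonneg hε.le (pow_nonneg hq'.le 3))
  calc ‖Matrix.toEuclideanCLM (𝕜 := ℝ) E x‖
      = Real.sqrt (‖Matrix.toEuclideanCLM (𝕜 := ℝ) E x‖ ^ 2) := (Real.sqrt_sq (norm_nonneg _)).symm
    _ ≤ Real.sqrt ((1 / Real.sqrt ε * ‖x‖) ^ 2) := Real.sqrt_le_sqrt key
    _ = 1 / Real.sqrt ε * ‖x‖ := Real.sqrt_sq (by positivity)
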